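/- Let F = (f_1, …, f_m) : ℝⁿ → ℝᵐ be continuously differentiable and quasi-convex, β ∈ (0,1), and let (p^k), (v^k), (t_k) be infinite sequences generated by the steepest descent method with Armijo rule. If the set U := {p ∈ ℝⁿ : f_i(p) ≤ f_i(p^k) for all i = 1, …, m and all k ∈ ℕ} is nonempty, then the sequence (p^k) is quasi-Fejér convergent to U, i.e., for every q ∈ U there is a sequence (ε_k) of nonnegative reals with Σ_{k=0}^∞ ε_k < ∞ and ‖p^{k+1} − q‖² ≤ ‖p^k − q‖² + ε_k for all k. -/

import Mathlib

noncomputable section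

/-- The set of candidate Armijo steplengths `{2⁻ʲ : j ∈ ℕ}` at the point `p`
in the direction `v`, for the multicriteria function `f` with parameter `β`. -/
def armijoSet {n m : ℕ} (f : Fin m → EuclideanSpace ℝ (Fin n) → ℝ) (β : ℝ)
    (p v : EuclideanSpace ℝ (Fin n)) : Set ℝ :=
  {t : ℝ | (∃ j : ℕ, t = (1 / 2 : ℝ) ^ j) ∧
    ∀ i, f i (p + t • v) ≤ f i p + β * t * (inner ℝ (gradient (f i) p) v : ℝ)}

/-!
The steepest descent direction `v` at `p` satisfies `⟪∇fᵢ(p), v⟫ ≤ -‖v‖²/2`, so the Armijo rule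
gives `fᵢ(pᵏ⁺¹) ≤ fᵢ(pᵏ) - β tₖ ‖vᵏ‖²/2`; as `fᵢ(pᵏ) ≥ fᵢ(q)` for `q ∈ U`, telescoping shows that
`∑ tₖ ‖vᵏ‖²` converges. Quasi-convexity and `F(q) ≼ F(pᵏ)` give `⟪∇fᵢ(pᵏ), q - pᵏ⟫ ≤ 0` for all
`i`, and the first-order optimality of `vᵏ` then forces `⟪vᵏ, q - pᵏ⟫ ≥ 0`. Expanding the square,
`‖pᵏ⁺¹ - q‖² ≤ ‖pᵏ - q‖² + tₖ² ‖vᵏ‖²`, and `εₖ := tₖ² ‖vᵏ‖² ≤ tₖ ‖vᵏ‖²` is summable since `tₖ ≤ 1`.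
-/

open Set Filter Topology RealInnerProductSpace

variable {E : Type*} [NormedAddCommGroup E] [InnerProductSpace ℝ E]

theorem QuasiconvexOn.inner_gradient_sub_nonpos [CompleteSpace E] {g : E → ℝ}
    (hg : QuasiconvexOn ℝ univ g) {a b : E} (hga : DifferentiableAt ℝ g a) (hba : g b ≤ g a) :
    ⟪gradient g a, b - a⟫ ≤ 0 := by
  have hmax : IsMaxOn g (segment ℝ a b) a :=
    (hg (g a)).segment_subset ⟨mem_univ a, le_rfl⟩ ⟨mem_univ b, hba⟩ |>.trans fun _ hx => hx.2
  rw [inner_gradient_left]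
  exact hmax.localize.hasFDerivWithinAt_nonpos hga.hasFDerivAt.hasFDerivWithinAt
    (sub_mem_posTangentConeAt_of_segment_subset subset_rfl)

theorem norm_add_smul_sub_sq_le {x v q : E} {t : ℝ} (ht : 0 ≤ t) (hv : 0 ≤ ⟪v, q - x⟫) :
    ‖x + t • v - q‖ ^ 2 ≤ ‖x - q‖ ^ 2 + t ^ 2 * ‖v‖ ^ 2 := by
  have hcross : ⟪x - q, t • v⟫ = -(t * ⟪v, q - x⟫) := by
    rw [real_inner_smul_right, real_inner_comm, ← neg_sub q x, inner_neg_right, mul_neg]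
  rw [show x + t • v - q = (x - q) + t • v by abel, norm_add_sq_real, hcross, norm_smul,
    mul_pow, Real.norm_eq_abs, sq_abs]
  nlinarith [mul_nonneg ht hv]

theorem summable_of_le_sub_succ {a c : ℕ → ℝ} {L : ℝ} (hc : ∀ k, 0 ≤ c k)
    (hac : ∀ k, c k ≤ a k - a (k + 1)) (hL : ∀ k, L ≤ a k) : Summable c :=
  summable_of_sum_range_le hc fun N => calc
    ∑ k ∈ Finset.range N, c k ≤ ∑ k ∈ Finset.range N, (a k - a (k + 1)) :=
      Finset.sum_le_sum fun k _ => hac k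
    _ = a 0 - a N := Finset.sum_range_sub' a N
    _ ≤ a 0 - L := by linarith [hL N]

section SteepestDescent

variable {ι : Type*}

/-- With `gᵢ = ∇fᵢ(p)`, this says `v = v(p)`. -/
def IsSteepestDescentDir (g : ι → E) (v : E) : Prop :=
  ∀ w, (⨆ i, ⟪g i, v⟫) + ‖v‖ ^ 2 / 2 ≤ (⨆ i, ⟪g i, w⟫) + ‖w‖ ^ 2 / 2

variable [Finite ι]

theorem IsSteepestDescentDir.inner_le {g : ι → E} {v : E} (hv : IsSteepestDescentDir g v)
    (i : ι) : ⟪g i, v⟫ ≤ -(‖v‖ ^ 2 / 2) := by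
  have h0 := hv 0
  simp only [inner_zero_right, Real.iSup_const_zero, norm_zero] at h0
  have := le_ciSup (finite_range fun i => ⟪g i, v⟫).bddAbove i
  linarith

theorem IsSteepestDescentDir.inner_nonneg {g : ι → E} {v u : E} (hv : IsSteepestDescentDir g v)
    (hu : ∀ i, ⟪g i, u⟫ ≤ 0) : 0 ≤ ⟪v, u⟫ := by
  have key : ∀ s : ℝ, 0 < s → 0 ≤ 2 * ⟪v, u⟫ + s * ‖u‖ ^ 2 := by
    intro s hs
    -- moving from `v` towards `u` does not raise the maximum, so it cannot shorten `v`
    have hsup : (⨆ i, ⟪g i, v + s • u⟫) ≤ ⨆ i, ⟪g i, v⟫ :=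
      ciSup_mono (finite_range fun i => ⟪g i, v⟫).bddAbove fun i => by
        rw [inner_add_right, real_inner_smul_right]
        nlinarith [hu i]
    have h := hv (v + s • u)
    rw [norm_add_sq_real, real_inner_smul_right, norm_smul, mul_pow, Real.norm_eq_abs,
      sq_abs] at h
    refine nonneg_of_mul_nonneg_right (a := s) ?_ hs
    nlinarith
  have hlim : Tendsto (fun s : ℝ => 2 * ⟪v, u⟫ + s * ‖u‖ ^ 2) (𝓝[>] 0) (𝓝 (2 * ⟪v, u⟫)) := by
    have hcont : Continuous fun s : ℝ => 2 * ⟪v, u⟫ + s * ‖u‖ ^ 2 := by fun_prop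
    simpa using (hcont.tendsto 0).mono_left nhdsWithin_le_nhds
  linarith [ge_of_tendsto hlim (eventually_nhdsWithin_of_forall key)]

end SteepestDescent

section Armijo

variable {n m : ℕ} {f : Fin m → EuclideanSpace ℝ (Fin n) → ℝ} {β t : ℝ}
  {p v : EuclideanSpace ℝ (Fin n)}

theorem mem_Ioc_of_mem_armijoSet (ht : t ∈ armijoSet f β p v) : t ∈ Ioc 0 1 := by
  obtain ⟨⟨j, rfl⟩, -⟩ := ht
  exact ⟨by positivity, pow_le_one₀ (by norm_num) (by norm_num)⟩

theorem le_sub_of_mem_armijoSet (hβ : 0 ≤ β)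
    (hv : IsSteepestDescentDir (fun i => gradient (f i) p) v) (ht : t ∈ armijoSet f β p v)
    (i : Fin m) : f i (p + t • v) ≤ f i p - β * t * (‖v‖ ^ 2 / 2) := by
  have hβt : 0 ≤ β * t := mul_nonneg hβ (mem_Ioc_of_mem_armijoSet ht).1.le
  linarith [ht.2 i, mul_le_mul_of_nonneg_left (hv.inner_le i) hβt]

end Armijo

theorem steepest_descent_quasiFejer_general
    {n m : ℕ} (hm : 0 < m) (f : Fin m → EuclideanSpace ℝ (Fin n) → ℝ)
    (hf : ∀ i, ContDiff ℝ 1 (f i))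
    -- quasi-convexity of `F`
    (hqc : ∀ p q : EuclideanSpace ℝ (Fin n), ∀ s ∈ Set.Icc (0 : ℝ) 1, ∀ i,
      f i ((1 - s) • p + s • q) ≤ max (f i p) (f i q))
    (β : ℝ) (hβ : β ∈ Set.Ioo (0 : ℝ) 1)
    (p v : ℕ → EuclideanSpace ℝ (Fin n)) (t : ℕ → ℝ)
    -- `vᵏ` is the steepest descent direction at `pᵏ`
    (hv : ∀ k w,
      (⨆ i, (inner ℝ (gradient (f i) (p k)) (v k) : ℝ)) + ‖v k‖ ^ 2 / 2 ≤
        (⨆ i, (inner ℝ (gradient (f i) (p k)) w : ℝ)) + ‖w‖ ^ 2 / 2)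
    -- `tₖ` is the largest Armijo steplength of the form `2⁻ʲ`
    (ht : ∀ k, IsGreatest (armijoSet f β (p k) (v k)) (t k))
    (hp : ∀ k, p (k + 1) = p k + t k • v k) :
    ∀ q ∈ {q : EuclideanSpace ℝ (Fin n) | ∀ k i, f i q ≤ f i (p k)},
      ∃ ε : ℕ → ℝ, (∀ k, 0 ≤ ε k) ∧ Summable ε ∧
        ∀ k, ‖p (k + 1) - q‖ ^ 2 ≤ ‖p k - q‖ ^ 2 + ε k := by
  intro q hq
  have hdir : ∀ k, IsSteepestDescentDir (fun i => gradient (f i) (p k)) (v k) := hv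
  have htk : ∀ k, t k ∈ Ioc 0 1 := fun k => mem_Ioc_of_mem_armijoSet (ht k).1
  have hquasi : ∀ i, QuasiconvexOn ℝ univ (f i) := fun i =>
    quasiconvexOn_iff_le_max.2 ⟨convex_univ, fun x _ y _ a b _ hb hab => by
      obtain rfl : a = 1 - b := by linarith
      exact hqc x y b ⟨hb, by linarith⟩ i⟩
  have hinner : ∀ k, 0 ≤ ⟪v k, q - p k⟫ := fun k => (hdir k).inner_nonneg fun i =>
    (hquasi i).inner_gradient_sub_nonpos ((hf i).differentiable one_ne_zero _) (hq k i)
  have hdecrease : ∀ k i, f i (p (k + 1)) ≤ f i (p k) - β * t k * (‖v k‖ ^ 2 / 2) :=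
    fun k i => hp k ▸ le_sub_of_mem_armijoSet hβ.1.le (hdir k) (ht k).1 i
  have hsummable : Summable fun k => β * t k * (‖v k‖ ^ 2 / 2) := by
    let i₀ : Fin m := ⟨0, hm⟩
    refine summable_of_le_sub_succ (a := fun k => f i₀ (p k)) (L := f i₀ q)
      (fun k => ?_) (fun k => by linarith [hdecrease k i₀]) (fun k => hq k i₀)
    exact mul_nonneg (mul_nonneg hβ.1.le (htk k).1.le) (by positivity)
  refine ⟨fun k => t k ^ 2 * ‖v k‖ ^ 2, fun k => by positivity, ?_,
    fun k => hp k ▸ norm_add_smul_sub_sq_le (htk k).1.le (hinner k)⟩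
  refine (hsummable.mul_left (2 / β)).of_nonneg_of_le (fun k => by positivity) fun k => ?_
  have hβ0 := hβ.1.ne'
  obtain ⟨ht0, ht1⟩ := htk k
  calc t k ^ 2 * ‖v k‖ ^ 2 ≤ t k * ‖v k‖ ^ 2 := by gcongr; nlinarith
    _ = 2 / β * (β * t k * (‖v k‖ ^ 2 / 2)) := by field_simp

/-- Proposition 21 (Euclidean case): if `F` is quasi-convex and the set
`U = {p : F(p) ≼ F(pᵏ) ∀k}` is nonempty, then the sequence `(pᵏ)` is
quasi-Fejér convergent to `U`. -/
theorem steepest_descent_quasiFejer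
    {n m : ℕ} (hm : 0 < m) (f : Fin m → EuclideanSpace ℝ (Fin n) → ℝ)
    (hf : ∀ i, ContDiff ℝ 1 (f i))
    -- quasi-convexity of `F`
    (hqc : ∀ p q : EuclideanSpace ℝ (Fin n), ∀ s ∈ Set.Icc (0 : ℝ) 1, ∀ i,
      f i ((1 - s) • p + s • q) ≤ max (f i p) (f i q))
    (β : ℝ) (hβ : β ∈ Set.Ioo (0 : ℝ) 1)
    (p v : ℕ → EuclideanSpace ℝ (Fin n)) (t : ℕ → ℝ)
    -- each `pᵏ` is not Pareto critical
    (hcrit : ∀ k, ∃ w, ∀ i, (inner ℝ (gradient (f i) (p k)) w : ℝ) < 0)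
    -- `vᵏ` is the steepest descent direction at `pᵏ`
    (hv : ∀ k w,
      (⨆ i, (inner ℝ (gradient (f i) (p k)) (v k) : ℝ)) + ‖v k‖ ^ 2 / 2 ≤
        (⨆ i, (inner ℝ (gradient (f i) (p k)) w : ℝ)) + ‖w‖ ^ 2 / 2)
    -- `tₖ` is the largest Armijo steplength of the form `2⁻ʲ`
    (ht : ∀ k, IsGreatest (armijoSet f β (p k) (v k)) (t k))
    (hp : ∀ k, p (k + 1) = p k + t k • v k)
    (hU : {q : EuclideanSpace ℝ (Fin n) | ∀ k i, f i q ≤ f i (p k)}.Nonempty) :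
    ∀ q ∈ {q : EuclideanSpace ℝ (Fin n) | ∀ k i, f i q ≤ f i (p k)},
      ∃ ε : ℕ → ℝ, (∀ k, 0 ≤ ε k) ∧ Summable ε ∧
        ∀ k, ‖p (k + 1) - q‖ ^ 2 ≤ ‖p k - q‖ ^ 2 + ε k :=
  steepest_descent_quasiFejer_general hm f hf hqc β hβ p v t hv ht hp
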